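/- For the two-mode reduced Hamiltonian H̃ = (I_p + I_q)(J_p + J_q) + 2√(I_p I_q J_p J_q)cos(θ_q − θ_p + φ_p − φ_q), the three functions K₁ = I_p + I_q, K₂ = J_p + J_q, K₃ = I_q + J_q Poisson-commute with H̃ and pairwise with each other; hence the two-mode system is completely integrable. -/

import Mathlib

/-- Partial derivative in the `i`-th coordinate direction on `ℝ⁸`. -/
noncomputable def pd (i : Fin 8) (f : (Fin 8 → ℝ) → ℝ) (x : Fin 8 → ℝ) : ℝ :=
  fderiv ℝ f x (Pi.single i 1)

/-- Poisson bracket on functions of `(I_p, I_q, J_p, J_q, θ_p, θ_q, φ_p, φ_q)`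
(coordinates `0,…,7` respectively):
`{f,g} = Σ_j (∂f/∂I_j ∂g/∂θ_j − ∂f/∂θ_j ∂g/∂I_j + ∂f/∂J_j ∂g/∂φ_j − ∂f/∂φ_j ∂g/∂J_j)`. -/
noncomputable def pb (f g : (Fin 8 → ℝ) → ℝ) (x : Fin 8 → ℝ) : ℝ :=
  (pd 0 f x * pd 4 g x - pd 4 f x * pd 0 g x) +
  (pd 1 f x * pd 5 g x - pd 5 f x * pd 1 g x) +
  (pd 2 f x * pd 6 g x - pd 6 f x * pd 2 g x) +
  (pd 3 f x * pd 7 g x - pd 7 f x * pd 3 g x)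

/-- The two-mode reduced Hamiltonian
`H̃ = (I_p+I_q)(J_p+J_q) + 2√(I_p I_q J_p J_q) cos(θ_q − θ_p + φ_p − φ_q)`. -/
noncomputable def Htilde : (Fin 8 → ℝ) → ℝ := fun x =>
  (x 0 + x 1) * (x 2 + x 3) +
    2 * Real.sqrt (x 0 * x 1 * x 2 * x 3) * Real.cos (x 5 - x 4 + x 6 - x 7)

/-- `K₁ = I_p + I_q`. -/
def K1 : (Fin 8 → ℝ) → ℝ := fun x => x 0 + x 1
/-- `K₂ = J_p + J_q`. -/
def K2 : (Fin 8 → ℝ) → ℝ := fun x => x 2 + x 3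
/-- `K₃ = I_q + J_q`. -/
def K3 : (Fin 8 → ℝ) → ℝ := fun x => x 1 + x 3

/-! A function invariant under all translations along `v` has `fderiv f x v = 0`: either it is
differentiable at `x` and this is the derivative at `0` of the constant `t ↦ f (x + t • v)`, or
`fderiv` takes its junk value `0`. Now `H̃` depends on the angles only through
`Ψ = θ_q − θ_p + φ_p − φ_q`, so it is invariant along the Hamiltonian flows `e₄ + e₅`, `e₆ + e₇`,
`e₅ + e₇` of `K₁, K₂, K₃`, and functions of the actions alone commute with each other. -/

theorem fderiv_apply_eq_zero_of_forall_add_smul {𝕜 E F : Type*} [NontriviallyNormedField 𝕜]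
    [NormedAddCommGroup E] [NormedSpace 𝕜 E] [NormedAddCommGroup F] [NormedSpace 𝕜 F]
    {f : E → F} {v : E} (h : ∀ y (t : 𝕜), f (y + t • v) = f y) (x : E) :
    fderiv 𝕜 f x v = 0 := by
  by_cases hf : DifferentiableAt 𝕜 f x
  · rw [← hf.lineDeriv_eq_fderiv, lineDeriv]
    simp only [h x, deriv_const]
  · rw [fderiv_zero_of_not_differentiableAt hf, zero_apply]

theorem pd_add_pd_eq_zero_of_forall_add_smul {f : (Fin 8 → ℝ) → ℝ} {i j : Fin 8}
    (h : ∀ y (t : ℝ), f (y + t • (Pi.single i 1 + Pi.single j 1)) = f y) (x : Fin 8 → ℝ) :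
    pd i f x + pd j f x = 0 := by
  rw [pd, pd, ← map_add]
  exact fderiv_apply_eq_zero_of_forall_add_smul h x

theorem pd_apply_add_apply (i j k : Fin 8) (x : Fin 8 → ℝ) :
    pd i (fun y => y j + y k) x =
      (Pi.single i 1 : Fin 8 → ℝ) j + (Pi.single i 1 : Fin 8 → ℝ) k := by
  have h : HasFDerivAt (fun y : Fin 8 → ℝ => y j + y k) _ x :=
    (hasFDerivAt_apply (𝕜 := ℝ) j x).add (hasFDerivAt_apply (𝕜 := ℝ) k x)
  rw [pd, h.fderiv]
  rfl

def DependsOnlyOnActions (f : (Fin 8 → ℝ) → ℝ) : Prop :=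
  ∀ y z : Fin 8 → ℝ, (∀ i : Fin 8, (i : ℕ) < 4 → y i = z i) → f y = f z

namespace DependsOnlyOnActions

variable {f g : (Fin 8 → ℝ) → ℝ}

theorem pd_eq_zero (hf : DependsOnlyOnActions f) {i : Fin 8} (hi : 4 ≤ (i : ℕ))
    (x : Fin 8 → ℝ) : pd i f x = 0 := by
  refine fderiv_apply_eq_zero_of_forall_add_smul (fun y t => hf _ _ fun j hj => ?_) x
  have hji : j ≠ i := fun h => by omega
  simp [hji]

theorem pb_eq (hf : DependsOnlyOnActions f) (g : (Fin 8 → ℝ) → ℝ) (x : Fin 8 → ℝ) :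
    pb f g x = pd 0 f x * pd 4 g x + pd 1 f x * pd 5 g x + pd 2 f x * pd 6 g x +
      pd 3 f x * pd 7 g x := by
  simp only [pb, hf.pd_eq_zero (i := 4) (by decide), hf.pd_eq_zero (i := 5) (by decide),
    hf.pd_eq_zero (i := 6) (by decide), hf.pd_eq_zero (i := 7) (by decide)]
  ring

theorem pb_eq_zero (hf : DependsOnlyOnActions f) (hg : DependsOnlyOnActions g)
    (x : Fin 8 → ℝ) : pb f g x = 0 := by
  simp only [hf.pb_eq, hg.pd_eq_zero (i := 4) (by decide), hg.pd_eq_zero (i := 5) (by decide),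
    hg.pd_eq_zero (i := 6) (by decide), hg.pd_eq_zero (i := 7) (by decide)]
  ring

end DependsOnlyOnActions

theorem dependsOnlyOnActions_K1 : DependsOnlyOnActions K1 := fun y z h => by
  simp only [K1, h 0 (by decide), h 1 (by decide)]

theorem dependsOnlyOnActions_K2 : DependsOnlyOnActions K2 := fun y z h => by
  simp only [K2, h 2 (by decide), h 3 (by decide)]

theorem dependsOnlyOnActions_K3 : DependsOnlyOnActions K3 := fun y z h => by
  simp only [K3, h 1 (by decide), h 3 (by decide)]

theorem Htilde_add_smul {v : Fin 8 → ℝ} (h0 : v 0 = 0) (h1 : v 1 = 0) (h2 : v 2 = 0)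
    (h3 : v 3 = 0) (hΨ : v 5 - v 4 + v 6 - v 7 = 0) (y : Fin 8 → ℝ) (t : ℝ) :
    Htilde (y + t • v) = Htilde y := by
  simp only [Htilde, Pi.add_apply, Pi.smul_apply, smul_eq_mul, h0, h1, h2, h3, mul_zero,
    add_zero]
  congr 3
  linear_combination t * hΨ

theorem stmt_12_general (x : Fin 8 → ℝ) :
    pb K1 Htilde x = 0 ∧ pb K2 Htilde x = 0 ∧ pb K3 Htilde x = 0 ∧
    pb K1 K2 x = 0 ∧ pb K1 K3 x = 0 ∧ pb K2 K3 x = 0 := by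
  refine ⟨?_, ?_, ?_, dependsOnlyOnActions_K1.pb_eq_zero dependsOnlyOnActions_K2 x,
    dependsOnlyOnActions_K1.pb_eq_zero dependsOnlyOnActions_K3 x,
    dependsOnlyOnActions_K2.pb_eq_zero dependsOnlyOnActions_K3 x⟩
  · have h := pd_add_pd_eq_zero_of_forall_add_smul (i := 4) (j := 5)
      (Htilde_add_smul (by simp) (by simp) (by simp) (by simp) (by simp)) x
    rw [dependsOnlyOnActions_K1.pb_eq]
    unfold K1
    simpa [pd_apply_add_apply] using h
  · have h := pd_add_pd_eq_zero_of_forall_add_smul (i := 6) (j := 7)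
      (Htilde_add_smul (by simp) (by simp) (by simp) (by simp) (by simp)) x
    rw [dependsOnlyOnActions_K2.pb_eq]
    unfold K2
    simpa [pd_apply_add_apply] using h
  · have h := pd_add_pd_eq_zero_of_forall_add_smul (i := 5) (j := 7)
      (Htilde_add_smul (by simp) (by simp) (by simp) (by simp) (by simp)) x
    rw [dependsOnlyOnActions_K3.pb_eq]
    unfold K3
    simpa [pd_apply_add_apply] using h

/-- `K₁, K₂, K₃` Poisson-commute with `H̃` and pairwise with each other. -/
theorem stmt_12 (x : Fin 8 → ℝ)
    (h0 : 0 < x 0) (h1 : 0 < x 1) (h2 : 0 < x 2) (h3 : 0 < x 3) :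
    pb K1 Htilde x = 0 ∧ pb K2 Htilde x = 0 ∧ pb K3 Htilde x = 0 ∧
    pb K1 K2 x = 0 ∧ pb K1 K3 x = 0 ∧ pb K2 K3 x = 0 :=
  stmt_12_general x
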